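/- arXiv:1103.1268 — 6 statements merged into one kernel-verified Lean document; each statement's English description precedes it below -/
import Mathlib

section
/- Let a ≤ b be integers, let w be a positive integer, and let x, y be complex numbers such that x+1 is not a nonpositive integer and none of the complex numbers y+k+1 and x−y−k+1 (for a ≤ k ≤ b) is a nonpositive integer. Then Σ_{k=a}^{b−1} [(−y−k−1)^w − (x−y−k+1)^w] · (−1)^{wk} · binom(x, y+k)^{−w} = (x+1)^w · [ (−1)^{wb} · binom(x+1, y+b)^{−w} − (−1)^{wa} · binom(x+1, y+a)^{−w} ]. -/
/-! The summand is the difference of consecutive values of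
`F k = (x + 1) ^ w * (-1) ^ (w * k) * binom(x + 1, y + k) ^ (-w)`, by the absorption identities
`binom(x + 1, v) = (x + 1) / (x - v + 1) * binom(x, v)` and
`binom(x + 1, v + 1) = (x + 1) / (v + 1) * binom(x, v)` (both from `Γ(s + 1) = s Γ(s)`),
so the sum telescopes to `F b - F a`. -/

open Finset

/-- Generalized binomial coefficient via the complex Gamma function. -/
noncomputable def cbinom (u v : ℂ) : ℂ :=
  Complex.Gamma (u + 1) / (Complex.Gamma (v + 1) * Complex.Gamma (u - v + 1))

theorem Int.sum_Ico_sub {M : Type*} [AddCommGroup M] (f : ℤ → M) {a b : ℤ} (hab : a ≤ b) :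
    ∑ k ∈ Ico a b, (f (k + 1) - f k) = f b - f a := by
  induction b, hab using Int.leInduction with
  | base => simp
  | succ b hab ih =>
    rw [← Order.succ_eq_add_one, ← insert_Ico_right_eq_Ico_succ hab,
      sum_insert right_notMem_Ico, ih, Order.succ_eq_add_one]
    abel

theorem cbinom_add_one_left {x v : ℂ} (hx : x + 1 ≠ 0) (hxv : x - v + 1 ≠ 0) :
    cbinom (x + 1) v = (x + 1) / (x - v + 1) * cbinom x v := by
  rw [cbinom, cbinom, Complex.Gamma_add_one _ hx, add_sub_right_comm, Complex.Gamma_add_one _ hxv]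
  field_simp

theorem cbinom_add_one_add_one {x v : ℂ} (hx : x + 1 ≠ 0) (hv : v + 1 ≠ 0) :
    cbinom (x + 1) (v + 1) = (x + 1) / (v + 1) * cbinom x v := by
  rw [cbinom, cbinom, Complex.Gamma_add_one _ hx, Complex.Gamma_add_one _ hv,
    add_sub_add_right_eq_sub]
  field_simp

theorem sub_pow_mul_cbinom_zpow_neg {x v : ℂ} (w : ℕ) (hx : x + 1 ≠ 0) (hv : v + 1 ≠ 0)
    (hxv : x - v + 1 ≠ 0) :
    ((-v - 1) ^ w - (x - v + 1) ^ w) * cbinom x v ^ (-(w : ℤ)) =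
      (x + 1) ^ w *
        ((-1) ^ w * cbinom (x + 1) (v + 1) ^ (-(w : ℤ)) - cbinom (x + 1) v ^ (-(w : ℤ))) := by
  rw [cbinom_add_one_add_one hx hv, cbinom_add_one_left hx hxv, show -v - 1 = -1 * (v + 1) by ring,
    mul_pow]
  simp only [zpow_neg, zpow_natCast, mul_pow, div_pow, mul_inv, inv_div]
  field_simp

theorem binomial_identity_three_general (a b : ℤ) (hab : a ≤ b) (w : ℕ) (x y : ℂ)
    (hx : ∀ m : ℕ, x + 1 ≠ -(m : ℂ))
    (h1 : ∀ k : ℤ, a ≤ k → k ≤ b → ∀ m : ℕ, y + (k : ℂ) + 1 ≠ -(m : ℂ))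
    (h2 : ∀ k : ℤ, a ≤ k → k ≤ b → ∀ m : ℕ, x - y - (k : ℂ) + 1 ≠ -(m : ℂ)) :
    ∑ k ∈ Finset.Ico a b,
        (((-y - (k : ℂ) - 1) ^ w - (x - y - (k : ℂ) + 1) ^ w) * (-1 : ℂ) ^ ((w : ℤ) * k) *
          cbinom x (y + (k : ℂ)) ^ (-(w : ℤ))) =
    (x + 1) ^ w * ((-1 : ℂ) ^ ((w : ℤ) * b) * cbinom (x + 1) (y + (b : ℂ)) ^ (-(w : ℤ)) -
                   (-1 : ℂ) ^ ((w : ℤ) * a) * cbinom (x + 1) (y + (a : ℂ)) ^ (-(w : ℤ))) := by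
  have hx0 : x + 1 ≠ 0 := by simpa using hx 0
  set F : ℤ → ℂ := fun k ↦
    (x + 1) ^ w * ((-1 : ℂ) ^ ((w : ℤ) * k) * cbinom (x + 1) (y + k) ^ (-(w : ℤ)))
  have step : ∀ k ∈ Ico a b,
      ((-y - (k : ℂ) - 1) ^ w - (x - y - (k : ℂ) + 1) ^ w) * (-1 : ℂ) ^ ((w : ℤ) * k) *
        cbinom x (y + (k : ℂ)) ^ (-(w : ℤ)) = F (k + 1) - F k := by
    intro k hk
    obtain ⟨hak, hkb⟩ := mem_Ico.mp hk
    have hv : y + k + 1 ≠ 0 := by simpa using h1 k hak hkb.le 0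
    have hxv : x - (y + k) + 1 ≠ 0 := by simpa [sub_sub] using h2 k hak hkb.le 0
    have hsign : (-1 : ℂ) ^ ((w : ℤ) * (k + 1)) = (-1) ^ ((w : ℤ) * k) * (-1) ^ w := by
      rw [mul_add_one, zpow_add₀ (neg_ne_zero.2 one_ne_zero), zpow_natCast]
    simp only [F, Int.cast_add, Int.cast_one, ← add_assoc, hsign]
    linear_combination (-1 : ℂ) ^ ((w : ℤ) * k) * sub_pow_mul_cbinom_zpow_neg w hx0 hv hxv
  rw [sum_congr rfl step, Int.sum_Ico_sub F hab, mul_sub]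

theorem binomial_identity_three (a b : ℤ) (hab : a ≤ b) (w : ℕ) (hw : 0 < w) (x y : ℂ)
    (hx : ∀ m : ℕ, x + 1 ≠ -(m : ℂ))
    (h1 : ∀ k : ℤ, a ≤ k → k ≤ b → ∀ m : ℕ, y + (k : ℂ) + 1 ≠ -(m : ℂ))
    (h2 : ∀ k : ℤ, a ≤ k → k ≤ b → ∀ m : ℕ, x - y - (k : ℂ) + 1 ≠ -(m : ℂ)) :
    ∑ k ∈ Finset.Ico a b,
        (((-y - (k : ℂ) - 1) ^ w - (x - y - (k : ℂ) + 1) ^ w) * (-1 : ℂ) ^ ((w : ℤ) * k) *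
          cbinom x (y + (k : ℂ)) ^ (-(w : ℤ))) =
    (x + 1) ^ w * ((-1 : ℂ) ^ ((w : ℤ) * b) * cbinom (x + 1) (y + (b : ℂ)) ^ (-(w : ℤ)) -
                   (-1 : ℂ) ^ ((w : ℤ) * a) * cbinom (x + 1) (y + (a : ℂ)) ^ (-(w : ℤ))) :=
  binomial_identity_three_general a b hab w x y hx h1 h2
end

section
/- For every nonnegative integer n, 3 · Σ_{k=0}^{2n} (−1)^k · k · (2n−k) · C(2n,k)^3 = (−1)^n · 4 · n^2 · C(2n,n) · C(3n,n), as an identity of integers, where C denotes the ordinary binomial coefficient. -/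
open Finset

/-!
Let `F n k` be the summand and `T n = ∑ₖ F n k`. Zeilberger's algorithm produces a companion
`G n k = (-1)^k C(2n+2,k)^3 S(n,k)`, with `S` an explicit polynomial, such that
`G n (k+1) - G n k` is a nonzero multiple (for `n ≥ 1`) of `n^2 F(n+1,k) + 3(3n+1)(3n+2) F(n,k)`.
Summing over `k` telescopes to `n^2 T(n+1) + 3(3n+1)(3n+2) T(n) = 0`. The right-hand side obeys
the same first-order recurrence by the ratio formulas for binomial coefficients, and the two
sides agree at `n = 1`.
-/

theorem intCast_choose_succ_right_eq (m k : ℕ) :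
    (m.choose (k + 1) : ℤ) * (k + 1) = m.choose k * (m - k) := by
  by_cases hk : k ≤ m
  · rw [← Nat.cast_sub hk]
    exact_mod_cast Nat.choose_succ_right_eq m k
  · rw [Nat.choose_eq_zero_of_lt (by omega), Nat.choose_eq_zero_of_lt (by omega)]
    simp

theorem intCast_choose_mul_succ_eq (m k : ℕ) :
    (m.choose k : ℤ) * (m + 1) = (m + 1).choose k * (m + 1 - k) := by
  by_cases hk : k ≤ m + 1
  · rw [← Nat.cast_one, ← Nat.cast_add, ← Nat.cast_sub hk]
    exact_mod_cast Nat.choose_mul_succ_eq m k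
  · rw [Nat.choose_eq_zero_of_lt (by omega), Nat.choose_eq_zero_of_lt (by omega)]
    simp

theorem intCast_choose_mul_succ_mul_succ_eq (m k : ℕ) :
    (m.choose k : ℤ) * ((m + 1) * (m + 2)) =
      (m + 2).choose k * ((m + 1 - k) * (m + 2 - k)) := by
  have h₁ := intCast_choose_mul_succ_eq m k
  have h₂ := intCast_choose_mul_succ_eq (m + 1) k
  push_cast at h₂
  linear_combination (m + 2 : ℤ) * h₁ + (m + 1 - k : ℤ) * h₂

theorem choose_two_mul_mul_choose_three_mul_succ (n : ℕ) :
    ((n : ℤ) + 1) ^ 2 * (2 * (n + 1)).choose (n + 1) * (3 * (n + 1)).choose (n + 1) =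
      3 * (3 * n + 1) * (3 * n + 2) * (2 * n).choose n * (3 * n).choose n := by
  have hB : ((n : ℤ) + 1) * (2 * (n + 1)).choose (n + 1) =
      2 * (2 * n + 1) * (2 * n).choose n := by
    exact_mod_cast Nat.succ_mul_centralBinom_succ n
  have hA : ((3 * n + 2 : ℕ) + 1 : ℤ) * (3 * n + 2).choose n =
      (3 * (n + 1)).choose (n + 1) * (n + 1) := by
    exact_mod_cast Nat.add_one_mul_choose_eq (3 * n + 2) n
  have hX := intCast_choose_mul_succ_eq (3 * n + 1) n
  have hY := intCast_choose_mul_succ_eq (3 * n) n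
  push_cast at hA hX hY
  linear_combination ((n : ℤ) + 1) * (3 * (n + 1)).choose (n + 1) * hB
    - 2 * (2 * (n : ℤ) + 1) * (2 * n).choose n * hA
    - 3 * (2 * (n : ℤ) + 1) * (2 * n).choose n * hX
    - 3 * (3 * (n : ℤ) + 2) * (2 * n).choose n * hY

def dixonWeightedTerm (n k : ℕ) : ℤ :=
  (-1) ^ k * k * (2 * n - k) * ((2 * n).choose k : ℤ) ^ 3

def dixonWeightedSum (n : ℕ) : ℤ :=
  ∑ k ∈ range (2 * n + 1), dixonWeightedTerm n k

theorem dixonWeightedTerm_eq_zero {n k : ℕ} (hk : 2 * n < k) : dixonWeightedTerm n k = 0 := by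
  simp [dixonWeightedTerm, Nat.choose_eq_zero_of_lt hk]

theorem sum_range_dixonWeightedTerm {n N : ℕ} (hN : 2 * n + 1 ≤ N) :
    ∑ k ∈ range N, dixonWeightedTerm n k = dixonWeightedSum n :=
  (sum_subset (range_subset_range.2 hN) fun _ _ hk ↦
    dixonWeightedTerm_eq_zero (by simpa using hk)).symm

def dixonCertPoly (n k : ℤ) : ℤ :=
  k^3*(16+216*n+1248*n^2+3880*n^3+6944*n^4+7152*n^5+3936*n^6+896*n^7)
  + k^4*(-72-852*n-4212*n^2-11016*n^3-16264*n^4-13416*n^5-5632*n^6-896*n^7)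
  + k^5*(132+1350*n+5580*n^2+11774*n^3+13296*n^4+7584*n^5+1696*n^6)
  + k^6*(-126-1095*n-3663*n^2-5872*n^3-4504*n^4-1320*n^5)
  + k^7*(66+477*n+1227*n^2+1342*n^3+528*n^4)
  + k^8*(-18-105*n-189*n^2-108*n^3)
  + k^9*(2+9*n+9*n^2)

theorem dixonCertPoly_zero (n : ℤ) : dixonCertPoly n 0 = 0 := by
  simp [dixonCertPoly]

-- The telescoping identity `G n (k+1) - G n k = …` with the binomial coefficients divided out.
theorem dixonCertPoly_succ (n k : ℤ) :
    (2 * n + 2 - k) ^ 3 * dixonCertPoly n (k + 1) + (k + 1) ^ 3 * dixonCertPoly n k =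
      -2 * n * (k + 1) ^ 3 * (((2 * n + 1) * (2 * n + 2)) ^ 3 * n ^ 2 * k * (2 * n + 2 - k)
        + 3 * (3 * n + 1) * (3 * n + 2) * k * (2 * n - k)
          * ((2 * n + 1 - k) * (2 * n + 2 - k)) ^ 3) := by
  simp only [dixonCertPoly]
  ring

def dixonCertTerm (n k : ℕ) : ℤ :=
  (-1) ^ k * ((2 * (n + 1)).choose k : ℤ) ^ 3 * dixonCertPoly n k

theorem dixonCertTerm_zero (n : ℕ) : dixonCertTerm n 0 = 0 := by
  simp [dixonCertTerm, dixonCertPoly_zero]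

theorem dixonCertTerm_eq_zero {n k : ℕ} (hk : 2 * (n + 1) < k) : dixonCertTerm n k = 0 := by
  simp [dixonCertTerm, Nat.choose_eq_zero_of_lt hk]

theorem dixonCertTerm_succ_sub (n k : ℕ) :
    dixonCertTerm n (k + 1) - dixonCertTerm n k =
      2 * n * ((2 * n + 1) * (2 * n + 2)) ^ 3 * (n ^ 2 * dixonWeightedTerm (n + 1) k
        + 3 * (3 * n + 1) * (3 * n + 2) * dixonWeightedTerm n k) := by
  refine mul_left_cancel₀ (by positivity : ((k : ℤ) + 1) ^ 3 ≠ 0) ?_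
  have h₁ := intCast_choose_succ_right_eq (2 * (n + 1)) k
  have h₂ := intCast_choose_mul_succ_mul_succ_eq (2 * n) k
  rw [show 2 * n + 2 = 2 * (n + 1) by ring] at h₂
  push_cast at h₁ h₂
  have h₁' := congrArg (· ^ 3) h₁
  have h₂' := congrArg (· ^ 3) h₂
  simp only [mul_pow] at h₁' h₂'
  simp only [dixonCertTerm, dixonWeightedTerm]
  push_cast
  linear_combination (-((-1 : ℤ) ^ k) * dixonCertPoly n (k + 1)) * h₁'
    - (-1 : ℤ) ^ k * ((2 * (n + 1)).choose k : ℤ) ^ 3 * dixonCertPoly_succ n k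
    - (2 * n * (k + 1) ^ 3 * (-1 : ℤ) ^ k * 3 * (3 * n + 1) * (3 * n + 2) * k * (2 * n - k))
      * h₂'

theorem dixonWeightedSum_recurrence {n : ℕ} (hn : 0 < n) :
    n ^ 2 * dixonWeightedSum (n + 1) + 3 * (3 * n + 1) * (3 * n + 2) * dixonWeightedSum n = 0 := by
  have htel := sum_range_sub (dixonCertTerm n) (2 * n + 3)
  simp only [dixonCertTerm_succ_sub, dixonCertTerm_zero,
    dixonCertTerm_eq_zero (by omega : 2 * (n + 1) < 2 * n + 3), sub_zero, ← mul_sum,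
    sum_add_distrib, sum_range_dixonWeightedTerm (by omega : 2 * (n + 1) + 1 ≤ 2 * n + 3),
    sum_range_dixonWeightedTerm (by omega : 2 * n + 1 ≤ 2 * n + 3)] at htel
  refine (mul_eq_zero.1 htel).resolve_left ?_
  positivity

theorem dixon_weighted (n : ℕ) :
    3 * ∑ k ∈ Finset.range (2 * n + 1),
        (-1 : ℤ) ^ k * (k : ℤ) * ((2 * n : ℤ) - (k : ℤ)) * (((2 * n).choose k : ℤ)) ^ 3 =
    (-1 : ℤ) ^ n * 4 * (n : ℤ) ^ 2 * ((2 * n).choose n : ℤ) * ((3 * n).choose n : ℤ) := by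
  change 3 * dixonWeightedSum n = _
  induction n with
  | zero => simp [dixonWeightedSum, dixonWeightedTerm]
  | succ n ih =>
    rcases n.eq_zero_or_pos with rfl | hn
    · decide
    · refine mul_left_cancel₀ (by positivity : (n : ℤ) ^ 2 ≠ 0) ?_
      push_cast
      linear_combination 3 * dixonWeightedSum_recurrence hn
        - 3 * (3 * (n : ℤ) + 1) * (3 * n + 2) * ih
        + (-1 : ℤ) ^ n * 4 * n ^ 2 * choose_two_mul_mul_choose_three_mul_succ n
end

section
/- Let a ≤ b be integers, let w be a positive integer, and let x, y be complex numbers such that none of the complex numbers y+1, x+k+1 (for a ≤ k ≤ b), and x+k−y+1 (for a ≤ k ≤ b) is a nonpositive integer, and such that y−x−b+i ≠ 0 for all integers 1 ≤ i ≤ b−a. Then Σ_{k=a}^{b−1} [ (x+k+1)^w · H1(y−x−b, b−k−1) − (x−y+k)^w · H1(y−x−b, b−k) ] · binom(x+k, y)^w = −(y+1)^w · binom(x+a, y+1)^w · H1(y−x−b, b−a). -/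
open Finset

/-- Generalized harmonic number of order 1 with complex offset `c`:
`H1 c n = ∑_{i=1}^{n} 1/(c+i)` (zero if `n ≤ 0`). -/
noncomputable def H1 (c : ℂ) (n : ℤ) : ℂ :=
  ∑ i ∈ Finset.range n.toNat, 1 / (c + (i : ℂ) + 1)

lemma H1_zero (c : ℂ) : H1 c 0 = 0 := by
  simp [H1]

lemma cbinom_neg_one (u : ℂ) : cbinom u (-1) = 0 := by
  simp [cbinom]

lemma add_one_mul_cbinom_add_one (u v : ℂ) :
    (v + 1) * cbinom u (v + 1) = (u - v) * cbinom u v := by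
  by_cases hv : v + 1 = 0
  · rw [eq_neg_of_add_eq_zero_left hv, cbinom_neg_one]
    simp
  rw [cbinom, cbinom, show u - (v + 1) + 1 = u - v by ring, Complex.Gamma_add_one _ hv]
  by_cases huv : u - v = 0
  · simp [huv]
  rw [Complex.Gamma_add_one _ huv]
  field_simp

lemma add_one_mul_cbinom_add_one_add_one {u : ℂ} (hu : u + 1 ≠ 0) (v : ℂ) :
    (v + 1) * cbinom (u + 1) (v + 1) = (u + 1) * cbinom u v := by
  by_cases hv : v + 1 = 0
  · rw [hv, eq_neg_of_add_eq_zero_left hv, cbinom_neg_one]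
    simp
  rw [cbinom, cbinom, show u + 1 - (v + 1) + 1 = u - v + 1 by ring,
    Complex.Gamma_add_one _ hv, Complex.Gamma_add_one _ hu]
  field_simp

theorem harmonic_identity_1b_general (a b : ℤ) (hab : a ≤ b) (w : ℕ) (x y : ℂ)
    (hx1 : ∀ k : ℤ, a ≤ k → k ≤ b → ∀ m : ℕ, x + (k : ℂ) + 1 ≠ -(m : ℂ)) :
    ∑ k ∈ Finset.Ico a b,
        (((x + (k : ℂ) + 1) ^ w * H1 (y - x - (b : ℂ)) (b - k - 1) -
          (x - y + (k : ℂ)) ^ w * H1 (y - x - (b : ℂ)) (b - k)) * cbinom (x + (k : ℂ)) y ^ w) =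
    -((y + 1) ^ w * cbinom (x + (a : ℂ)) (y + 1) ^ w * H1 (y - x - (b : ℂ)) (b - a)) := by
  set g : ℤ → ℂ := fun k => ((y + 1) * cbinom (x + k) (y + 1)) ^ w * H1 (y - x - b) (b - k)
  have hterm : ∀ k ∈ Ico a b,
      ((x + k + 1) ^ w * H1 (y - x - b) (b - k - 1) - (x - y + k) ^ w * H1 (y - x - b) (b - k)) *
        cbinom (x + k) y ^ w = g (k + 1) - g k := by
    intro k hk
    have hxk : x + k + 1 ≠ 0 := by
      simpa using hx1 k (mem_Ico.1 hk).1 (mem_Ico.1 hk).2.le 0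
    have hg_succ :
        g (k + 1) = ((x + k + 1) * cbinom (x + k) y) ^ w * H1 (y - x - b) (b - k - 1) := by
      simp only [g]
      rw [Int.cast_add, Int.cast_one, ← add_assoc, add_one_mul_cbinom_add_one_add_one hxk,
        show b - (k + 1) = b - k - 1 by ring]
    have hg : g k = ((x + k - y) * cbinom (x + k) y) ^ w * H1 (y - x - b) (b - k) := by
      rw [← add_one_mul_cbinom_add_one]
    rw [hg_succ, hg, mul_pow, mul_pow, show x + k - y = x - y + k by ring]
    ring
  rw [sum_congr rfl hterm, Int.sum_Ico_sub g hab]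
  simp only [g, sub_self, H1_zero, mul_zero, zero_sub, mul_pow]

theorem harmonic_identity_1b (a b : ℤ) (hab : a ≤ b) (w : ℕ) (hw : 0 < w) (x y : ℂ)
    (hy : ∀ m : ℕ, y + 1 ≠ -(m : ℂ))
    (hx1 : ∀ k : ℤ, a ≤ k → k ≤ b → ∀ m : ℕ, x + (k : ℂ) + 1 ≠ -(m : ℂ))
    (hx2 : ∀ k : ℤ, a ≤ k → k ≤ b → ∀ m : ℕ, x + (k : ℂ) - y + 1 ≠ -(m : ℂ))
    (hh : ∀ i : ℤ, 1 ≤ i → i ≤ b - a → y - x - (b : ℂ) + (i : ℂ) ≠ 0) :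
    ∑ k ∈ Finset.Ico a b,
        (((x + (k : ℂ) + 1) ^ w * H1 (y - x - (b : ℂ)) (b - k - 1) -
          (x - y + (k : ℂ)) ^ w * H1 (y - x - (b : ℂ)) (b - k)) * cbinom (x + (k : ℂ)) y ^ w) =
    -((y + 1) ^ w * cbinom (x + (a : ℂ)) (y + 1) ^ w * H1 (y - x - (b : ℂ)) (b - a)) :=
  harmonic_identity_1b_general a b hab w x y hx1
end

section
/- Let a ≤ b be integers, let w be a positive integer, and let x, y be complex numbers such that x+1 is not a nonpositive integer, none of the complex numbers y+k+1 and x−y−k+1 (for a ≤ k ≤ b) is a nonpositive integer, and y+a+i ≠ 0 for all integers 1 ≤ i ≤ b−a. Then Σ_{k=a}^{b−1} [ (−y−k−1)^w · H1(y+a, k−a+1) − (x−y−k+1)^w · H1(y+a, k−a) ] · (−1)^{wk} · binom(x, y+k)^{−w} = (x+1)^w · (−1)^{wb} · binom(x+1, y+b)^{−w} · H1(y+a, b−a). -/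
/-!
Write `G k = (x + 1)^w (-1)^{wk} binom(x + 1, y + k)^{-w}` (`scaledInvCbinom`). The Gamma
recurrence gives `binom(x + 1, v) (x - v + 1) = (x + 1) binom(x, v)` and
`binom(x + 1, v + 1) (v + 1) = (x + 1) binom(x, v)`, which turn the `k`-th summand into
`G (k + 1) H1(y + a, k - a + 1) - G k H1(y + a, k - a)`. The sum therefore telescopes to
`G b H1(y + a, b - a) - G a H1(y + a, 0)`, and `H1(y + a, 0) = 0`.
-/

open Finset

lemma pow_mul_zpow_neg_eq_of_mul_eq {K : Type*} [Field K] {p q s t : K} (hs : s ≠ 0)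
    (ht : t ≠ 0) (h : p * t = s * q) (n : ℕ) :
    s ^ n * p ^ (-(n : ℤ)) = t ^ n * q ^ (-(n : ℤ)) := by
  rw [← eq_div_iff ht] at h
  rw [zpow_neg, zpow_neg, zpow_natCast, zpow_natCast, h, mul_div_assoc, mul_pow, div_pow, mul_inv,
    inv_div]
  field_simp

lemma cbinom_add_one_left_mul (u v : ℂ) (hu : u + 1 ≠ 0) (huv : u - v + 1 ≠ 0) :
    cbinom (u + 1) v * (u - v + 1) = (u + 1) * cbinom u v := by
  rw [cbinom, cbinom, add_sub_right_comm, Complex.Gamma_add_one _ hu,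
    Complex.Gamma_add_one _ huv]
  field_simp

lemma cbinom_add_one_add_one_mul (u v : ℂ) (hu : u + 1 ≠ 0) (hv : v + 1 ≠ 0) :
    cbinom (u + 1) (v + 1) * (v + 1) = (u + 1) * cbinom u v := by
  rw [cbinom, cbinom, add_sub_add_right_eq_sub, Complex.Gamma_add_one _ hu,
    Complex.Gamma_add_one _ hv]
  field_simp

noncomputable def scaledInvCbinom (w : ℕ) (x y : ℂ) (k : ℤ) : ℂ :=
  (x + 1) ^ w * (-1 : ℂ) ^ ((w : ℤ) * k) * cbinom (x + 1) (y + k) ^ (-(w : ℤ))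

lemma summand_eq_scaledInvCbinom_sub (w : ℕ) (x y p q : ℂ) (k : ℤ) (hx : x + 1 ≠ 0)
    (hy : y + k + 1 ≠ 0) (hxy : x - y - k + 1 ≠ 0) :
    ((-y - k - 1) ^ w * p - (x - y - k + 1) ^ w * q) *
        ((-1 : ℂ) ^ ((w : ℤ) * k) * cbinom x (y + k) ^ (-(w : ℤ))) =
      scaledInvCbinom w x y (k + 1) * p - scaledInvCbinom w x y k * q := by
  have hup : (x + 1) ^ w * cbinom (x + 1) (y + (k + 1 : ℤ)) ^ (-(w : ℤ)) =
      (y + k + 1) ^ w * cbinom x (y + k) ^ (-(w : ℤ)) :=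
    pow_mul_zpow_neg_eq_of_mul_eq hx hy
      (by rw [Int.cast_add, Int.cast_one, ← add_assoc, cbinom_add_one_add_one_mul _ _ hx hy]) w
  have hleft : (x + 1) ^ w * cbinom (x + 1) (y + k) ^ (-(w : ℤ)) =
      (x - y - k + 1) ^ w * cbinom x (y + k) ^ (-(w : ℤ)) :=
    pow_mul_zpow_neg_eq_of_mul_eq hx hxy
      (by rw [sub_sub, cbinom_add_one_left_mul _ _ hx (by rwa [← sub_sub])]) w
  have hsign : (-y - k - 1) ^ w = (-1) ^ w * (y + k + 1) ^ w := by rw [← mul_pow]; ring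
  rw [scaledInvCbinom, scaledInvCbinom, hsign, mul_add, zpow_add₀ (by norm_num), mul_one,
    zpow_natCast]
  linear_combination (-1 : ℂ) ^ ((w : ℤ) * k) * (q * hleft - (-1) ^ w * p * hup)

theorem harmonic_identity_3a_general (a b : ℤ) (hab : a ≤ b) (w : ℕ) (x y : ℂ)
    (hx : ∀ m : ℕ, x + 1 ≠ -(m : ℂ))
    (h1 : ∀ k : ℤ, a ≤ k → k ≤ b → ∀ m : ℕ, y + (k : ℂ) + 1 ≠ -(m : ℂ))
    (h2 : ∀ k : ℤ, a ≤ k → k ≤ b → ∀ m : ℕ, x - y - (k : ℂ) + 1 ≠ -(m : ℂ)) :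
    ∑ k ∈ Finset.Ico a b,
        (((-y - (k : ℂ) - 1) ^ w * H1 (y + (a : ℂ)) (k - a + 1) -
          (x - y - (k : ℂ) + 1) ^ w * H1 (y + (a : ℂ)) (k - a)) *
          ((-1 : ℂ) ^ ((w : ℤ) * k) * cbinom x (y + (k : ℂ)) ^ (-(w : ℤ)))) =
    (x + 1) ^ w * (-1 : ℂ) ^ ((w : ℤ) * b) * cbinom (x + 1) (y + (b : ℂ)) ^ (-(w : ℤ)) *
      H1 (y + (a : ℂ)) (b - a) := by
  set F : ℤ → ℂ := fun k ↦ scaledInvCbinom w x y k * H1 (y + a) (k - a)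
  have hF_start : F a = 0 := by simp [F, H1]
  have hsummand : ∀ k ∈ Ico a b,
      ((-y - k - 1) ^ w * H1 (y + a) (k - a + 1) - (x - y - k + 1) ^ w * H1 (y + a) (k - a)) *
        ((-1 : ℂ) ^ ((w : ℤ) * k) * cbinom x (y + k) ^ (-(w : ℤ))) = F (k + 1) - F k := by
    intro k hk
    obtain ⟨hak, hkb⟩ := mem_Ico.mp hk
    simp only [F, add_sub_right_comm k 1 a]
    exact summand_eq_scaledInvCbinom_sub w x y _ _ k (by simpa using hx 0)
      (by simpa using h1 k hak hkb.le 0) (by simpa using h2 k hak hkb.le 0)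
  rw [sum_congr rfl hsummand, Int.sum_Ico_sub F hab, hF_start, sub_zero]
  rfl

theorem harmonic_identity_3a (a b : ℤ) (hab : a ≤ b) (w : ℕ) (hw : 0 < w) (x y : ℂ)
    (hx : ∀ m : ℕ, x + 1 ≠ -(m : ℂ))
    (h1 : ∀ k : ℤ, a ≤ k → k ≤ b → ∀ m : ℕ, y + (k : ℂ) + 1 ≠ -(m : ℂ))
    (h2 : ∀ k : ℤ, a ≤ k → k ≤ b → ∀ m : ℕ, x - y - (k : ℂ) + 1 ≠ -(m : ℂ))
    (hh : ∀ i : ℤ, 1 ≤ i → i ≤ b - a → y + (a : ℂ) + (i : ℂ) ≠ 0) :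
    ∑ k ∈ Finset.Ico a b,
        (((-y - (k : ℂ) - 1) ^ w * H1 (y + (a : ℂ)) (k - a + 1) -
          (x - y - (k : ℂ) + 1) ^ w * H1 (y + (a : ℂ)) (k - a)) *
          ((-1 : ℂ) ^ ((w : ℤ) * k) * cbinom x (y + (k : ℂ)) ^ (-(w : ℤ)))) =
    (x + 1) ^ w * (-1 : ℂ) ^ ((w : ℤ) * b) * cbinom (x + 1) (y + (b : ℂ)) ^ (-(w : ℤ)) *
      H1 (y + (a : ℂ)) (b - a) :=
  harmonic_identity_3a_general a b hab w x y hx h1 h2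
end

section
/- Let n be a nonnegative integer and let m be a complex number that is not a negative integer and satisfies m ≠ n+1. Then Σ_{k=0}^{n} binom(m, n−k) · binom(n, k)^{−1} · H_k = (n+1)/(n−m+1) · [ H_{n+1} + (binom(m, n+1) − 1)/(n−m+1) ]. -/
open Finset

/-! With `c = m - n`, the `k`-th summand is `Γ(m+1)/n! · k!/Γ(k+c+1) · H_k`. The sequence
`t_k = k!/Γ(k+c)` satisfies `t_{k+1} - t_k = (1-c) · k!/Γ(k+c+1)`, so a summation by parts against
`H_k` (whose differences `1/(k+1)` turn `t_{k+1}` back into `k!/Γ(k+c+1)`) followed by one more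
telescoping sum gives the closed form. Working with `1/Γ`, which is entire, keeps every step valid
at the poles of `Γ`. -/

open Complex Nat

theorem sum_range_sub_mul_harmonic {K : Type*} [Field K] [CharZero K] (f : ℕ → K) (N : ℕ) :
    ∑ k ∈ range N, (f (k + 1) - f k) * (harmonic k : K) =
      f N * harmonic N - ∑ k ∈ range N, f (k + 1) / (k + 1) := by
  induction N with
  | zero => simp
  | succ N ih =>
    rw [sum_range_succ, ih, sum_range_succ, harmonic_succ]
    push_cast
    ring

noncomputable def factorialDivGamma (c : ℂ) (k : ℕ) : ℂ := k ! / Gamma (k + c)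

theorem factorialDivGamma_zero (c : ℂ) : factorialDivGamma c 0 = (Gamma c)⁻¹ := by
  simp [factorialDivGamma]

theorem factorialDivGamma_succ (c : ℂ) (k : ℕ) :
    factorialDivGamma c (k + 1) = (k + 1) * factorialDivGamma (c + 1) k := by
  simp only [factorialDivGamma, factorial_succ]
  push_cast
  ring_nf

theorem factorialDivGamma_succ_sub (c : ℂ) (k : ℕ) :
    factorialDivGamma c (k + 1) - factorialDivGamma c k =
      (1 - c) * factorialDivGamma (c + 1) k := by
  rw [factorialDivGamma_succ, factorialDivGamma, factorialDivGamma, div_eq_mul_inv,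
    div_eq_mul_inv, one_div_Gamma_eq_self_mul_one_div_Gamma_add_one ((k : ℂ) + c), ← add_assoc]
  ring

theorem sum_factorialDivGamma (c : ℂ) (N : ℕ) :
    (1 - c) * ∑ k ∈ range N, factorialDivGamma (c + 1) k =
      factorialDivGamma c N - (Gamma c)⁻¹ := by
  simp_rw [mul_sum, ← factorialDivGamma_succ_sub, sum_range_sub, factorialDivGamma_zero]

theorem sum_factorialDivGamma_mul_harmonic (c : ℂ) (N : ℕ) :
    (1 - c) ^ 2 * ∑ k ∈ range N, factorialDivGamma (c + 1) k * harmonic k =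
      (1 - c) * factorialDivGamma c N * harmonic N - (factorialDivGamma c N - (Gamma c)⁻¹) := by
  have hcancel (k : ℕ) (x : ℂ) : ((k : ℂ) + 1) * x / (k + 1) = x :=
    mul_div_cancel_left₀ x k.cast_add_one_ne_zero
  have hparts := sum_range_sub_mul_harmonic (factorialDivGamma c) N
  simp_rw [factorialDivGamma_succ_sub, factorialDivGamma_succ, hcancel, mul_assoc,
    ← mul_sum] at hparts
  rw [pow_two, mul_assoc, hparts, ← sum_factorialDivGamma]
  ring

theorem cbinom_natCast_right (u : ℂ) (k : ℕ) :
    cbinom u k = Gamma (u + 1) / (k ! * Gamma (u - k + 1)) := by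
  rw [cbinom, Gamma_nat_eq_factorial]

theorem cbinom_natCast_natCast {n k : ℕ} (h : k ≤ n) : cbinom n k = n.choose k := by
  rw [cbinom_natCast_right, cast_choose ℂ h, Gamma_nat_eq_factorial, ← cast_sub h,
    Gamma_nat_eq_factorial]

theorem cbinom_sub_mul_inv_cbinom (m : ℂ) {n k : ℕ} (h : k ≤ n) :
    cbinom m (n - k) * (cbinom n k)⁻¹ =
      Gamma (m + 1) / n ! * factorialDivGamma (m - n + 1) k := by
  rw [cbinom_natCast_natCast h, cast_choose ℂ h, ← cast_sub h, cbinom_natCast_right,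
    factorialDivGamma, cast_sub h]
  have hfact : (n - k)! ≠ 0 := factorial_ne_zero _
  field_simp
  ring_nf

theorem harmonic_choose_ratio_identity (n : ℕ) (m : ℂ)
    (hm : ∀ j : ℕ, m ≠ -((j : ℂ) + 1)) (hm' : m ≠ (n : ℂ) + 1) :
    ∑ k ∈ Finset.range (n + 1),
        cbinom m ((n : ℂ) - (k : ℂ)) * (cbinom (n : ℂ) (k : ℂ))⁻¹ * (harmonic k : ℂ) =
    ((n : ℂ) + 1) / ((n : ℂ) - m + 1) *
      ((harmonic (n + 1) : ℂ) + (cbinom m ((n : ℂ) + 1) - 1) / ((n : ℂ) - m + 1)) := by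
  have hΓ : Gamma (m + 1) ≠ 0 := Gamma_ne_zero fun j h ↦ hm j (by linear_combination h)
  have hd : (n : ℂ) - m + 1 ≠ 0 := fun h ↦ hm' (by linear_combination -h)
  have hsum := sum_factorialDivGamma_mul_harmonic (m - n) (n + 1)
  rw [show 1 - (m - n) = (n : ℂ) - m + 1 by ring, factorialDivGamma,
    show ((n + 1 : ℕ) : ℂ) + (m - n) = m + 1 by push_cast; ring] at hsum
  have hb : cbinom m (n + 1) = Gamma (m + 1) / ((n + 1 : ℕ) ! * Gamma (m - n)) := by
    rw [← cast_add_one, cbinom_natCast_right]; push_cast; ring_nf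
  rw [sum_congr rfl fun k hk ↦ by
      rw [cbinom_sub_mul_inv_cbinom m (mem_range_succ_iff.mp hk), mul_assoc], ← mul_sum, hb]
  have hS := (eq_div_iff (pow_ne_zero 2 hd)).mpr ((mul_comm _ _).trans hsum)
  rw [hS, div_mul_eq_div_mul_one_div _ _ (Gamma _), one_div]
  have hfact : (n ! : ℂ) ≠ 0 := cast_ne_zero.mpr (factorial_ne_zero n)
  push_cast [factorial_succ]
  field_simp
  ring
end

section
/- Let n be a nonnegative integer and let m be a complex number that is not an integer less than or equal to n. Then Σ_{k=0}^{n} (−1)^k · binom(m, k)^{−1} · H_k = (m+1)/(m+2) · [ (−1)^n · binom(m+1, n+1)^{−1} · ( H_{n+1} − 1/(m+2) ) − 1/(m+2) ]. -/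
/-!
Reciprocal binomial coefficients satisfy the Pascal-type rule
`(m + 2) / binom(m, k) = (m + 1) (1 / binom(m + 1, k) + 1 / binom(m + 1, k + 1))`,
so the alternating sum of the `1 / binom(m, k)` telescopes. Summing by parts against
`H_{k+1} - H_k = 1 / (k + 1)` and using the absorption identity
`(m + 1 - k) / binom(m + 1, k + 1) = (k + 1) / binom(m + 1, k)`, the summand
`(-1)^k H_k / binom(m, k)` becomes the forward difference `G (k + 1) - G k` of
`G k = -(m + 1)/(m + 2) ((-1)^k (H_k - 1/(m + 2)) / binom(m + 1, k) + 1/(m + 2))`,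
and `G 0 = 0`.
-/

open Finset

open Complex

theorem inv_cbinom_succ_right {u v : ℂ} (hv : v + 1 ≠ 0) (huv : u - v ≠ 0) :
    (u - v) * (cbinom u (v + 1))⁻¹ = (v + 1) * (cbinom u v)⁻¹ := by
  rw [cbinom, cbinom, inv_div, inv_div, Gamma_add_one _ hv, sub_add_eq_sub_sub, sub_add_cancel,
    Gamma_add_one _ huv]
  ring

theorem inv_cbinom_succ_left {u v : ℂ} (hu : u + 1 ≠ 0) (huv : u + 1 - v ≠ 0) :
    (u + 1) * (cbinom (u + 1) v)⁻¹ = (u + 1 - v) * (cbinom u v)⁻¹ := by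
  rw [cbinom, cbinom, inv_div, inv_div, Gamma_add_one _ hu, Gamma_add_one _ huv,
    sub_add_eq_add_sub, ← mul_div_assoc, mul_div_mul_left _ _ hu]
  ring

theorem add_two_mul_inv_cbinom {u v : ℂ} (hu : u + 1 ≠ 0) (hv : v + 1 ≠ 0) (huv : u + 1 - v ≠ 0) :
    (u + 2) * (cbinom u v)⁻¹ =
      (u + 1) * ((cbinom (u + 1) v)⁻¹ + (cbinom (u + 1) (v + 1))⁻¹) := by
  refine mul_left_cancel₀ huv ?_
  linear_combination
    (-(u + 2)) * inv_cbinom_succ_left hu huv - (u + 1) * inv_cbinom_succ_right hv huv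

theorem cbinom_zero_right {u : ℂ} (hu : Gamma (u + 1) ≠ 0) : cbinom u 0 = 1 := by
  rw [cbinom, zero_add, Gamma_one, one_mul, sub_zero, div_self hu]

noncomputable def harmonicInvChooseAntidiff (m : ℂ) (k : ℕ) : ℂ :=
  -(m + 1) / (m + 2) *
    ((-1) ^ k * (cbinom (m + 1) k)⁻¹ * (harmonic k - 1 / (m + 2)) + 1 / (m + 2))

theorem harmonicInvChooseAntidiff_zero {m : ℂ} (hm : Gamma (m + 2) ≠ 0) :
    harmonicInvChooseAntidiff m 0 = 0 := by
  rw [harmonicInvChooseAntidiff, Nat.cast_zero,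
    cbinom_zero_right (by rwa [add_assoc, one_add_one_eq_two])]
  simp

theorem harmonicInvChooseAntidiff_succ_sub {m : ℂ} {k : ℕ} (hm1 : m + 1 ≠ 0) (hm2 : m + 2 ≠ 0)
    (hmk : m + 1 - k ≠ 0) :
    harmonicInvChooseAntidiff m (k + 1) - harmonicInvChooseAntidiff m k =
      (-1) ^ k * (cbinom m k)⁻¹ * harmonic k := by
  have hk : (k : ℂ) + 1 ≠ 0 := by exact_mod_cast k.succ_ne_zero
  have hpascal : (cbinom m k)⁻¹ =
      (m + 1) * ((cbinom (m + 1) k)⁻¹ + (cbinom (m + 1) (k + 1))⁻¹) / (m + 2) := by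
    rw [eq_div_iff hm2, mul_comm]
    exact add_two_mul_inv_cbinom hm1 hk hmk
  have habsorb :
      (cbinom (m + 1) (k + 1))⁻¹ = (k + 1) * (cbinom (m + 1) k)⁻¹ / (m + 1 - k) := by
    rw [eq_div_iff hmk, mul_comm]
    exact inv_cbinom_succ_right hk hmk
  simp only [harmonicInvChooseAntidiff, harmonic_succ, Nat.cast_succ, pow_succ, hpascal, habsorb]
  push_cast
  field_simp
  ring

theorem harmonic_inv_choose_identity (n : ℕ) (m : ℂ)
    (hm : ∀ j : ℤ, j ≤ (n : ℤ) → m ≠ (j : ℂ)) :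
    ∑ k ∈ Finset.range (n + 1),
        (-1 : ℂ) ^ k * (cbinom m (k : ℂ))⁻¹ * (harmonic k : ℂ) =
    (m + 1) / (m + 2) *
      ((-1 : ℂ) ^ n * (cbinom (m + 1) ((n : ℂ) + 1))⁻¹ *
          ((harmonic (n + 1) : ℂ) - 1 / (m + 2)) - 1 / (m + 2)) := by
  have hm1 : m + 1 ≠ 0 := fun h => hm (-1) (by omega) (by push_cast; linear_combination h)
  have hm2 : m + 2 ≠ 0 := fun h => hm (-2) (by omega) (by push_cast; linear_combination h)
  have hΓ : Gamma (m + 2) ≠ 0 := Gamma_ne_zero fun j h =>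
    hm (-j - 2) (by omega) (by push_cast; linear_combination h)
  have hstep : ∀ k ∈ range (n + 1), (-1) ^ k * (cbinom m k)⁻¹ * harmonic k =
      harmonicInvChooseAntidiff m (k + 1) - harmonicInvChooseAntidiff m k := fun k hk =>
    (harmonicInvChooseAntidiff_succ_sub hm1 hm2 fun h =>
      hm (k - 1) (by rw [mem_range] at hk; omega) (by push_cast; linear_combination h)).symm
  rw [sum_congr rfl hstep, sum_range_sub, harmonicInvChooseAntidiff_zero hΓ, sub_zero,
    harmonicInvChooseAntidiff]
  push_cast
  ring
end
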